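/- If t and s are strongly normalizing and t[x:=s] ∈ ⟦A⟧, then (λx.t)s ∈ ⟦A⟧. -/

import Mathlib

inductive Tm : Type
| var : ℕ → Tm
| lam : Tm → Tm
| app : Tm → Tm → Tm
| pair : Tm → Tm → Tm
| p1 : Tm → Tm
| p2 : Tm → Tm

namespace Tm

/-- Renaming of de Bruijn indices. -/
def rename (f : ℕ → ℕ) : Tm → Tm
| var n => var (f n)
| lam t => lam (t.rename (fun n => match n with | 0 => 0 | n+1 => f n + 1))
| app t s => app (t.rename f) (s.rename f)
| pair t s => pair (t.rename f) (s.rename f)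
| p1 t => p1 (t.rename f)
| p2 t => p2 (t.rename f)

/-- Capture-avoiding simultaneous substitution. -/
def subst (σ : ℕ → Tm) : Tm → Tm
| var n => σ n
| lam t => lam (t.subst (fun n => match n with | 0 => var 0 | n+1 => (σ n).rename Nat.succ))
| app t s => app (t.subst σ) (s.subst σ)
| pair t s => pair (t.subst σ) (s.subst σ)
| p1 t => p1 (t.subst σ)
| p2 t => p2 (t.subst σ)

/-- Substitution of the single (outermost) free variable: t[x := s]. -/
def subst1 (t s : Tm) : Tm :=
  t.subst (fun n => match n with | 0 => s | n+1 => var n)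

/-- One-step reduction of the distributive λ-calculus. -/
inductive Step : Tm → Tm → Prop
| beta (t s) : Step (app (lam t) s) (t.subst1 s)
| proj1 (t1 t2) : Step (p1 (pair t1 t2)) t1
| proj2 (t1 t2) : Step (p2 (pair t1 t2)) t2
| pairApp (t s u) : Step (app (pair t s) u) (pair (app t u) (app s u))
| projLam1 (t) : Step (p1 (lam t)) (lam (p1 t))
| projLam2 (t) : Step (p2 (lam t)) (lam (p2 t))
| lam_cong {t t'} : Step t t' → Step (lam t) (lam t')
| appL {t t' s} : Step t t' → Step (app t s) (app t' s)
| appR {t s s'} : Step s s' → Step (app t s) (app t s')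
| pairL {t t' s} : Step t t' → Step (pair t s) (pair t' s)
| pairR {t s s'} : Step s s' → Step (pair t s) (pair t s')
| p1_cong {t t'} : Step t t' → Step (p1 t) (p1 t')
| p2_cong {t t'} : Step t t' → Step (p2 t) (p2 t')

/-- Many-step reduction. -/
def Steps : Tm → Tm → Prop := Relation.ReflTransGen Step

/-- A term is normal when no rule applies anywhere in it. -/
def Normal (t : Tm) : Prop := ¬ ∃ s, Step t s

/-- All free variables are < k. -/
def closedUnder : ℕ → Tm → Prop
| k, var n => n < k
| k, lam t => closedUnder (k+1) t
| k, app t s => closedUnder k t ∧ closedUnder k s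
| k, pair t s => closedUnder k t ∧ closedUnder k s
| k, p1 t => closedUnder k t
| k, p2 t => closedUnder k t

def Closed (t : Tm) : Prop := closedUnder 0 t

/-- Values: variables, abstractions, pairs. -/
def IsValue : Tm → Prop
| var _ => True
| lam _ => True
| pair _ _ => True
| _ => False

/-- Neutral terms: variables, applications, projections. -/
def Neutral : Tm → Prop
| var _ => True
| app _ _ => True
| p1 _ => True
| p2 _ => True
| _ => False

/-- Strong normalization: every reduction sequence is finite. -/
def SN (t : Tm) : Prop := Acc (fun a b => Step b a) t

end Tm

inductive Ty : Type
| base : Ty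
| arr : Ty → Ty → Ty
| conj : Ty → Ty → Ty

/-- The least congruence containing distributivity A ⇒ (B ∧ C) ≡ (A ⇒ B) ∧ (A ⇒ C). -/
inductive Iso : Ty → Ty → Prop
| refl (A) : Iso A A
| symm {A B} : Iso A B → Iso B A
| trans {A B C} : Iso A B → Iso B C → Iso A C
| distr (A B C) : Iso (Ty.arr A (Ty.conj B C)) (Ty.conj (Ty.arr A B) (Ty.arr A C))
| arrL {A C} (B) : Iso A C → Iso (Ty.arr A B) (Ty.arr C B)
| arrR {B C} (A) : Iso B C → Iso (Ty.arr A B) (Ty.arr A C)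
| conjL {A C} (B) : Iso A C → Iso (Ty.conj A B) (Ty.conj C B)
| conjR {B C} (A) : Iso B C → Iso (Ty.conj A B) (Ty.conj A C)

/-- Typing, with contexts as lists of types (de Bruijn), including the conversion rule for ≡. -/
inductive Typing : List Ty → Tm → Ty → Prop
| var {Γ n A} : Γ[n]? = some A → Typing Γ (Tm.var n) A
| lam {Γ t A B} : Typing (A :: Γ) t B → Typing Γ (Tm.lam t) (Ty.arr A B)
| app {Γ t s A B} : Typing Γ t (Ty.arr A B) → Typing Γ s A → Typing Γ (Tm.app t s) B
| pair {Γ t s A B} : Typing Γ t A → Typing Γ s B → Typing Γ (Tm.pair t s) (Ty.conj A B)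
| p1 {Γ t A B} : Typing Γ t (Ty.conj A B) → Typing Γ (Tm.p1 t) A
| p2 {Γ t A B} : Typing Γ t (Ty.conj A B) → Typing Γ (Tm.p2 t) B
| iso {Γ t A B} : Typing Γ t A → Iso A B → Typing Γ t B

/-- Reducibility interpretation of types. -/
def Red : Ty → Tm → Prop
| Ty.base, t => Tm.SN t
| Ty.arr A B, t => ∀ s, Red A s → Red B (Tm.app t s)
| Ty.conj A B, t => Red A (Tm.p1 t) ∧ Red B (Tm.p2 t)

/-!
Every interpretation ⟦A⟧ is a reducibility candidate (CR1–CR3). Since `(λx.t) s` is neutral,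
CR3 reduces the claim to its one-step reducts: the head reduct `t[x:=s]` is in ⟦A⟧ by hypothesis,
and the reducts `(λx.t') s` and `(λx.t) s'` are handled by induction on the strong normalization
of `t` and `s`, because `t[x:=s] → t'[x:=s]` and `t[x:=s] →* t[x:=s']` and ⟦A⟧ is closed under
reduction (CR2).
-/

namespace Tm

lemma rename_rename (t : Tm) (f g : ℕ → ℕ) :
    (t.rename f).rename g = t.rename (g ∘ f) := by
  induction t generalizing f g with
  | var n => rfl
  | lam t ih =>
    simp only [rename, ih]
    congr 2
    funext n; cases n <;> rfl
  | _ => simp only [rename, *]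

lemma subst_rename (t : Tm) (f : ℕ → ℕ) (σ : ℕ → Tm) :
    (t.rename f).subst σ = t.subst (σ ∘ f) := by
  induction t generalizing f σ with
  | var n => rfl
  | lam t ih =>
    simp only [rename, subst, ih]
    congr 2
    funext n; cases n <;> rfl
  | _ => simp only [rename, subst, *]

lemma rename_subst (t : Tm) (σ : ℕ → Tm) (f : ℕ → ℕ) :
    (t.subst σ).rename f = t.subst (fun n => (σ n).rename f) := by
  induction t generalizing σ f with
  | var n => rfl
  | lam t ih =>
    simp only [rename, subst, ih]
    congr 2
    funext n; cases n <;> simp [rename, rename_rename, Function.comp_def]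
  | _ => simp only [rename, subst, *]

lemma subst_subst (t : Tm) (σ τ : ℕ → Tm) :
    (t.subst σ).subst τ = t.subst (fun n => (σ n).subst τ) := by
  induction t generalizing σ τ with
  | var n => rfl
  | lam t ih =>
    simp only [subst, ih]
    congr 2
    funext n; cases n <;> simp [subst, subst_rename, rename_subst, Function.comp_def]
  | _ => simp only [subst, *]

lemma subst_var (t : Tm) : t.subst var = t := by
  induction t with
  | var n => rfl
  | lam t ih =>
    simp only [subst]
    convert congrArg lam ih
    cases ‹ℕ› <;> rfl
  | _ => simp only [subst, *]

lemma rename_eq_subst (t : Tm) (f : ℕ → ℕ) : t.rename f = t.subst (var ∘ f) := by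
  induction t generalizing f with
  | var n => rfl
  | lam t ih =>
    simp only [rename, subst, ih]
    congr 2
    funext n; cases n <;> rfl
  | _ => simp only [rename, subst, *]

lemma subst1_subst (t s : Tm) (σ : ℕ → Tm) :
    (t.subst1 s).subst σ
      = (t.subst (fun n => match n with | 0 => var 0 | n+1 => (σ n).rename Nat.succ)).subst1
          (s.subst σ) := by
  simp only [subst1, subst_subst]
  congr 1
  funext n
  cases n with
  | zero => rfl
  | succ n => simp [subst_rename, Function.comp_def, subst_var, subst]

lemma step_subst {t t' : Tm} (h : Step t t') (σ : ℕ → Tm) :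
    Step (t.subst σ) (t'.subst σ) := by
  induction h generalizing σ with
  | beta t s => rw [subst1_subst]; exact .beta _ _
  | proj1 => exact .proj1 _ _
  | proj2 => exact .proj2 _ _
  | pairApp => exact .pairApp _ _ _
  | projLam1 => exact .projLam1 _
  | projLam2 => exact .projLam2 _
  | lam_cong _ ih => exact .lam_cong (ih _)
  | appL _ ih => exact .appL (ih _)
  | appR _ ih => exact .appR (ih _)
  | pairL _ ih => exact .pairL (ih _)
  | pairR _ ih => exact .pairR (ih _)
  | p1_cong _ ih => exact .p1_cong (ih _)
  | p2_cong _ ih => exact .p2_cong (ih _)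

lemma Steps.map (f : Tm → Tm) (hf : ∀ {a b}, Step a b → Step (f a) (f b)) {t t' : Tm}
    (h : Steps t t') : Steps (f t) (f t') :=
  Relation.ReflTransGen.lift f (fun _ _ => hf) _ _ h

lemma steps_subst_of_steps (t : Tm) {σ σ' : ℕ → Tm} (h : ∀ n, Steps (σ n) (σ' n)) :
    Steps (t.subst σ) (t.subst σ') := by
  induction t generalizing σ σ' with
  | var n => exact h n
  | lam t ih =>
    refine Steps.map lam .lam_cong (ih fun n => ?_)
    cases n with
    | zero => exact .refl
    | succ n => simpa only [rename_eq_subst] using Steps.map _ (step_subst · _) (h n)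
  | app t s iht ihs =>
    exact (Steps.map (app · (s.subst σ)) .appL (iht h)).trans
      (Steps.map (app (t.subst σ') ·) .appR (ihs h))
  | pair t s iht ihs =>
    exact (Steps.map (pair · (s.subst σ)) .pairL (iht h)).trans
      (Steps.map (pair (t.subst σ') ·) .pairR (ihs h))
  | p1 t ih => exact Steps.map p1 .p1_cong (ih h)
  | p2 t ih => exact Steps.map p2 .p2_cong (ih h)

lemma steps_subst1_of_step (t : Tm) {s s' : Tm} (h : Step s s') :
    Steps (t.subst1 s) (t.subst1 s') :=
  steps_subst_of_steps t fun
    | 0 => .single h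
    | _ + 1 => .refl

lemma SN.of_map (f : Tm → Tm) (hf : ∀ {a b}, Step a b → Step (f a) (f b)) {t : Tm}
    (h : SN (f t)) : SN t :=
  Subrelation.accessible hf (InvImage.accessible f h)

end Tm

open Tm

/-- Girard's reducibility candidates: the properties CR1–CR3 of a set of terms. -/
structure IsCandidate (P : Tm → Prop) : Prop where
  sn {t : Tm} : P t → SN t
  step {t t' : Tm} : P t → Step t t' → P t'
  of_neutral {t : Tm} : Neutral t → (∀ t', Step t t' → P t') → P t

lemma isCandidate_SN : IsCandidate SN where
  sn h := h
  step h hs := h.inv hs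
  of_neutral _ h := ⟨_, h⟩

namespace IsCandidate

variable {P Q : Tm → Prop}

lemma steps (hP : IsCandidate P) {t t' : Tm} (ht : P t) (h : Steps t t') : P t' := by
  induction h with
  | refl => exact ht
  | tail _ hs ih => exact hP.step ih hs

lemma arr (hP : IsCandidate P) (hQ : IsCandidate Q) :
    IsCandidate fun t => ∀ s, P s → Q (app t s) where
  sn {t} h := by
    have hvar : P (var 0) := hP.of_neutral trivial fun _ h => nomatch h
    exact SN.of_map (app · (var 0)) .appL (hQ.sn (h _ hvar))
  step h ht s hs := hQ.step (h s hs) (.appL ht)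
  of_neutral {t} hneutral h s hs := by
    induction hP.sn hs with
    | intro s _ ih =>
      refine hQ.of_neutral trivial fun u hu => ?_
      cases hu with
      | beta => exact hneutral.elim
      | pairApp => exact hneutral.elim
      | appL ht => exact h _ ht s hs
      | appR hs' => exact ih _ hs' (hP.step hs hs')

lemma conj (hP : IsCandidate P) (hQ : IsCandidate Q) :
    IsCandidate fun t => P (p1 t) ∧ Q (p2 t) where
  sn h := SN.of_map p1 .p1_cong (hP.sn h.1)
  step h ht := ⟨hP.step h.1 (.p1_cong ht), hQ.step h.2 (.p2_cong ht)⟩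
  of_neutral {t} hneutral h := by
    constructor
    · refine hP.of_neutral trivial fun u hu => ?_
      cases hu with
      | proj1 => exact hneutral.elim
      | projLam1 => exact hneutral.elim
      | p1_cong ht => exact (h _ ht).1
    · refine hQ.of_neutral trivial fun u hu => ?_
      cases hu with
      | proj2 => exact hneutral.elim
      | projLam2 => exact hneutral.elim
      | p2_cong ht => exact (h _ ht).2

end IsCandidate

theorem isCandidate_red : ∀ A : Ty, IsCandidate (Red A)
  | .base => isCandidate_SN
  | .arr A B => (isCandidate_red A).arr (isCandidate_red B)
  | .conj A B => (isCandidate_red A).conj (isCandidate_red B)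

theorem red_beta_expansion (A : Ty) (t s : Tm) (ht : t.SN) (hs : s.SN)
    (h : Red A (t.subst1 s)) : Red A (Tm.app (Tm.lam t) s) := by
  have hA := isCandidate_red A
  induction ht generalizing s with
  | intro t _ iht =>
  induction hs with
  | intro s hs ihs =>
  refine hA.of_neutral trivial fun u hu => ?_
  cases hu with
  | beta => exact h
  | appL hlam =>
    cases hlam with
    | lam_cong ht' => exact iht _ ht' s (.intro s hs) (hA.step h (step_subst ht' _))
  | appR hs' => exact ihs _ hs' (hA.steps h (steps_subst1_of_step t hs'))
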